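/- Let d, e be metrics on ℕ, let (M_d, (u_i)) and (M_e, (v_j)) be completions of (ℕ,d) and (ℕ,e), and let ε > 0. Suppose L : M_d → M_e is a bijection with Lip(L) < 1 + ε and Lip(L⁻¹) < 1 + ε. Then there exists a correspondence ℛ between (ℕ × ℤ) ∪ {♣} and itself such that ♣ ℛ ♣ and |d̃(a,a') − ẽ(b,b')| < 2ε whenever a ℛ b and a' ℛ b'. -/
import Mathlib

private lemma min_sub_min_le {K X Y : ℝ} (hK : 1 ≤ K) (hX : 0 ≤ X) (hY : Y ≤ K * X) :
    min 1 Y - min 1 X ≤ K - 1 := by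
  rcases le_or_gt 1 X with h | h
  · have h1 : min 1 X = 1 := min_eq_left h
    have h2 : min 1 Y ≤ 1 := min_le_left _ _
    linarith
  · have hXm : min 1 X = X := min_eq_right h.le
    rcases le_or_gt (K * X) 1 with h2 | h2
    · have h3 : min 1 Y ≤ Y := min_le_right _ _
      nlinarith
    · have h3 : min 1 Y ≤ 1 := min_le_left _ _
      have h4 : 0 ≤ (K - 1) * (1 - X) := mul_nonneg (by linarith) (by linarith)
      nlinarith

private lemma min_lip (a x y : ℝ) : |min a x - min a y| ≤ |x - y| := by
  have key : ∀ p q : ℝ, min a p - min a q ≤ |p - q| := by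
    intro p q
    rcases le_total a q with h | h
    · have h1 : min a p ≤ a := min_le_left _ _
      have h2 : min a q = a := min_eq_left h
      have := abs_nonneg (p - q)
      linarith
    · have h1 : min a q = q := min_eq_right h
      have h2 : min a p ≤ p := min_le_right _ _
      have := le_abs_self (p - q)
      linarith
  rw [abs_sub_le_iff]
  exact ⟨key x y, abs_sub_comm x y ▸ key y x⟩


/- Context: a metric on ℕ is a function d : ℕ × ℕ → ℝ with d(m,n) = 0 iff m = n, symmetry
and the triangle inequality.  A completion of (ℕ,d) is a complete metric space M_d with a
dense sequence (u i) satisfying dist (u i) (u j) = d i j.  For a metric d on ℕ, d̃ is the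
metric on (ℕ × ℤ) ∪ {♣} (modelled by `Option (ℕ × ℤ)`, with `none` = ♣) defined by
d̃((i,k),(j,l)) = |10k − 10l| + min{1, 2^min(k,l)·d(i,j)}, d̃((i,k),♣) = |10k+4| + 1.
Lip(T) is the optimal Lipschitz constant; a correspondence relates every element on each
side to some element on the other. -/

/-- `d` is a metric on `ℕ`. -/
def IsMetricOnNat (d : ℕ → ℕ → ℝ) : Prop :=
  (∀ m n, d m n = 0 ↔ m = n) ∧ (∀ m n, d m n = d n m) ∧
    (∀ m n k, d m k ≤ d m n + d n k)

/-- The metric `d̃` on `(ℕ × ℤ) ∪ {♣}`. -/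
noncomputable def tildeD (d : ℕ → ℕ → ℝ) : Option (ℕ × ℤ) → Option (ℕ × ℤ) → ℝ
  | some p, some q =>
      |10 * (p.2 : ℝ) - 10 * (q.2 : ℝ)| + min 1 ((2 : ℝ) ^ (min p.2 q.2) * d p.1 q.1)
  | some p, none => |10 * (p.2 : ℝ) + 4| + 1
  | none, some q => |10 * (q.2 : ℝ) + 4| + 1
  | none, none => 0

theorem stmt15 (d e : ℕ → ℕ → ℝ) (hd : IsMetricOnNat d) (he : IsMetricOnNat e)
    (Md Me : Type*) [MetricSpace Md] [CompleteSpace Md] [MetricSpace Me] [CompleteSpace Me]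
    (u : ℕ → Md) (v : ℕ → Me) (hu : DenseRange u) (hv : DenseRange v)
    (hud : ∀ i j, dist (u i) (u j) = d i j) (hvd : ∀ i j, dist (v i) (v j) = e i j)
    (ε : ℝ) (hε : 0 < ε)
    (L : Md → Me) (hLbij : Function.Bijective L)
    -- Lip(L) < 1 + ε
    (hL : ∃ K : ℝ, K < 1 + ε ∧ ∀ x y : Md, dist (L x) (L y) ≤ K * dist x y)
    -- Lip(L⁻¹) < 1 + ε
    (hL' : ∃ K : ℝ, K < 1 + ε ∧ ∀ x y : Md, dist x y ≤ K * dist (L x) (L y)) :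
    ∃ R : Option (ℕ × ℤ) → Option (ℕ × ℤ) → Prop,
      (∀ a, ∃ b, R a b) ∧ (∀ b, ∃ a, R a b) ∧
      R none none ∧
      (∀ a a' b b', R a b → R a' b' → |tildeD d a a' - tildeD e b b'| < 2 * ε) := by
  obtain ⟨K0, hK0, hK0L⟩ := hL
  obtain ⟨K0', hK0', hK0'L⟩ := hL'
  set K : ℝ := max K0 1 with hKdef
  set K' : ℝ := max K0' 1 with hK'def
  have hK1 : 1 ≤ K := le_max_right _ _
  have hK'1 : 1 ≤ K' := le_max_right _ _
  have hKlt : K < 1 + ε := max_lt hK0 (by linarith)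
  have hK'lt : K' < 1 + ε := max_lt hK0' (by linarith)
  have hKL : ∀ x y : Md, dist (L x) (L y) ≤ K * dist x y := fun x y =>
    (hK0L x y).trans (mul_le_mul_of_nonneg_right (le_max_left _ _) dist_nonneg)
  have hK'L : ∀ x y : Md, dist x y ≤ K' * dist (L x) (L y) := fun x y =>
    (hK0'L x y).trans (mul_le_mul_of_nonneg_right (le_max_left _ _) dist_nonneg)
  have hc : (0:ℝ) < ε / 2 := by linarith
  have hpow : ∀ k : ℤ, (0:ℝ) < (2:ℝ) ^ k := fun k => zpow_pos (by norm_num) k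
  refine ⟨fun a b => match a, b with
    | none, none => True
    | some p, some q => p.2 = q.2 ∧ dist (L (u p.1)) (v q.1) < (ε/2) * (2:ℝ) ^ (-p.2)
    | _, _ => False, ?_, ?_, ?_, ?_⟩
  · rintro (_ | ⟨i, k⟩)
    · exact ⟨none, trivial⟩
    · obtain ⟨j, hj⟩ := hv.exists_dist_lt (L (u i)) (mul_pos hc (hpow (-k)))
      exact ⟨some (j, k), rfl, hj⟩
  · rintro (_ | ⟨j, k⟩)
    · exact ⟨none, trivial⟩
    · obtain ⟨x, hx⟩ := hLbij.2 (v j)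
      have hKpos : (0:ℝ) < K := lt_of_lt_of_le one_pos hK1
      obtain ⟨i, hi⟩ := hu.exists_dist_lt x (div_pos (mul_pos hc (hpow (-k))) hKpos)
      refine ⟨some (i, k), rfl, ?_⟩
      calc dist (L (u i)) (v j) = dist (L x) (L (u i)) := by rw [hx, dist_comm]
        _ ≤ K * dist x (u i) := hKL _ _
        _ < K * ((ε/2) * (2:ℝ) ^ (-k) / K) :=
            (mul_lt_mul_iff_right₀ hKpos).2 hi
        _ = (ε/2) * (2:ℝ) ^ (-k) := by
            rw [mul_comm]; exact div_mul_cancel₀ _ (ne_of_gt hKpos)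
  · trivial
  · rintro (_ | ⟨i, k⟩) (_ | ⟨i', k'⟩) (_ | ⟨j, l⟩) (_ | ⟨j', l'⟩) hab ha'b'
    all_goals try exact False.elim hab
    all_goals try exact False.elim ha'b'
    · simp only [tildeD, sub_zero, abs_zero]; linarith
    · obtain ⟨hlk, hdist⟩ := ha'b'
      simp only at hlk; subst hlk
      simp only [tildeD]
      rw [sub_self, abs_zero]; linarith
    · obtain ⟨hlk, hdist⟩ := hab
      simp only at hlk; subst hlk
      simp only [tildeD]
      rw [sub_self, abs_zero]; linarith
    · obtain ⟨hlk, hdist⟩ := hab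
      obtain ⟨hlk', hdist'⟩ := ha'b'
      simp only at hlk hlk'; subst hlk; subst hlk'
      simp only [tildeD]
      set m : ℤ := min k k' with hm
      have hreduce : ∀ P Q A : ℝ, (A + P) - (A + Q) = P - Q := by intros; ring
      rw [hreduce]
      set X : ℝ := (2:ℝ) ^ m * d i i' with hX
      set Y : ℝ := (2:ℝ) ^ m * dist (L (u i)) (L (u i')) with hY
      set Z : ℝ := (2:ℝ) ^ m * e j j' with hZ
      have hXnn : 0 ≤ X := mul_nonneg (hpow m).le (by rw [← hud]; exact dist_nonneg)
      have hYnn : 0 ≤ Y := mul_nonneg (hpow m).le dist_nonneg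
      have hYKX : Y ≤ K * X := by
        rw [hY, hX, ← hud]
        nlinarith [mul_le_mul_of_nonneg_left (hKL (u i) (u i')) (hpow m).le]
      have hXKY : X ≤ K' * Y := by
        rw [hY, hX, ← hud]
        nlinarith [mul_le_mul_of_nonneg_left (hK'L (u i) (u i')) (hpow m).le]
      have hbound1 : |min 1 X - min 1 Y| ≤ max (K - 1) (K' - 1) := by
        rw [abs_sub_le_iff]
        exact ⟨le_trans (min_sub_min_le hK'1 hYnn hXKY) (le_max_right _ _),
          le_trans (min_sub_min_le hK1 hXnn hYKX) (le_max_left _ _)⟩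
      have hpm : ∀ kk : ℤ, m ≤ kk → (2:ℝ) ^ m * (2:ℝ) ^ (-kk) ≤ 1 := by
        intro kk hkk
        rw [← zpow_add₀ (two_ne_zero)]
        exact zpow_le_one_of_nonpos₀ one_le_two (by omega)
      have ht1 : (2:ℝ) ^ m * dist (L (u i)) (v j) < ε / 2 := by
        calc (2:ℝ) ^ m * dist (L (u i)) (v j) < (2:ℝ) ^ m * ((ε/2) * (2:ℝ) ^ (-k)) :=
              (mul_lt_mul_iff_right₀ (hpow m)).2 hdist
          _ = (ε/2) * ((2:ℝ) ^ m * (2:ℝ) ^ (-k)) := by ring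
          _ ≤ (ε/2) * 1 := mul_le_mul_of_nonneg_left (hpm k (min_le_left _ _)) hc.le
          _ = ε / 2 := mul_one _
      have ht2 : (2:ℝ) ^ m * dist (L (u i')) (v j') < ε / 2 := by
        calc (2:ℝ) ^ m * dist (L (u i')) (v j') < (2:ℝ) ^ m * ((ε/2) * (2:ℝ) ^ (-k')) :=
              (mul_lt_mul_iff_right₀ (hpow m)).2 hdist'
          _ = (ε/2) * ((2:ℝ) ^ m * (2:ℝ) ^ (-k')) := by ring
          _ ≤ (ε/2) * 1 := mul_le_mul_of_nonneg_left (hpm k' (min_le_right _ _)) hc.le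
          _ = ε / 2 := mul_one _
      have hZY : |Z - Y| < ε := by
        have habs : |e j j' - dist (L (u i)) (L (u i'))| ≤
            dist (L (u i)) (v j) + dist (L (u i')) (v j') := by
          rw [← hvd, abs_sub_le_iff]
          constructor
          · have := dist_triangle4 (v j) (L (u i)) (L (u i')) (v j')
            have h1 := dist_comm (v j) (L (u i))
            have h2 := dist_comm (L (u i')) (v j')
            linarith
          · have := dist_triangle4 (L (u i)) (v j) (v j') (L (u i'))
            have h2 := dist_comm (v j') (L (u i'))
            linarith
        have : |Z - Y| = (2:ℝ) ^ m * |e j j' - dist (L (u i)) (L (u i'))| := by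
          rw [hZ, hY, ← mul_sub, abs_mul, abs_of_pos (hpow m)]
        rw [this]
        calc (2:ℝ) ^ m * |e j j' - dist (L (u i)) (L (u i'))|
            ≤ (2:ℝ) ^ m * (dist (L (u i)) (v j) + dist (L (u i')) (v j')) :=
              mul_le_mul_of_nonneg_left habs (hpow m).le
          _ = (2:ℝ) ^ m * dist (L (u i)) (v j) + (2:ℝ) ^ m * dist (L (u i')) (v j') := by ring
          _ < ε / 2 + ε / 2 := add_lt_add ht1 ht2
          _ = ε := by ring
      have hYZ : |min 1 Y - min 1 Z| ≤ |Y - Z| := min_lip 1 Y Z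
      have hmaxlt : max (K - 1) (K' - 1) < ε := max_lt (by linarith) (by linarith)
      calc |min 1 X - min 1 Z| ≤ |min 1 X - min 1 Y| + |min 1 Y - min 1 Z| := abs_sub_le _ _ _
        _ ≤ max (K - 1) (K' - 1) + |Y - Z| := add_le_add hbound1 hYZ
        _ < ε + ε := add_lt_add_of_le_of_lt hmaxlt.le (abs_sub_comm Z Y ▸ hZY)
        _ = 2 * ε := by ring
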